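/- (Green's function on the Rindler horizon, d = 6.) Fix l > 0 and define G : (0,∞) → ℝ by G(χ) = (1/(4π² l²)) · (2 + coth²(χ) + 3 cosh(χ) · ln(sinh(χ)/(1 + cosh(χ)))). Then: (i) for all χ > 0, (d/dχ)(sinh³(χ) · G′(χ)) = 4 · sinh³(χ) · G(χ); (ii) G(χ) → 0 as χ → ∞; (iii) lim_{χ→0⁺} 2π² · l² · sinh³(χ) · G′(χ) = −1. -/

import Mathlib

/-!
Since `(log tanh (χ / 2))' = 1 / sinh χ`, the flux `sinh³ χ · G'(χ)` is an explicit elementary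
function, and differentiating it once more gives `4 sinh³ χ · G(χ)`. Writing `t = tanh (χ / 2)`,
the only singular term of the flux is `sinh⁴ χ · log t = sinh³ χ (1 + cosh χ) · t log t`, which is
continuous at `0` because `t ↦ t log t` is; hence the flux tends to its value `-2` at `0`.
At infinity all terms are continuous functions of `u = e^{-χ}`, except `cosh χ · log t`, which
behaves like `cosh χ · (t - 1) → -1`; so `4π² l² G → 2 + 1 - 3 = 0`.
-/

open Real Filter Topology

lemma tendsto_mul_log_of_tendsto_mul_sub_one {α : Type*} {l : Filter α} {c t : α → ℝ} {a : ℝ}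
    (ht : Tendsto t l (𝓝 1)) (hct : Tendsto (fun x => c x * (t x - 1)) l (𝓝 a)) :
    Tendsto (fun x => c x * log (t x)) l (𝓝 a) := by
  have hslope : Tendsto (fun x => dslope log 1 (t x)) l (𝓝 1) := by
    have := (continuousAt_dslope_same.mpr (differentiableAt_log one_ne_zero)).tendsto.comp ht
    simpa [dslope_same, Function.comp_def] using this
  refine (mul_one a ▸ hct.mul hslope).congr fun x => ?_
  have := sub_smul_dslope log 1 (t x)
  rw [smul_eq_mul, log_one, sub_zero] at this
  rw [← this, mul_assoc]

lemma one_add_cosh_ne_zero (x : ℝ) : 1 + cosh x ≠ 0 := by positivity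

/-- `log (tanh (x / 2))`, in the form in which it enters the Green's function. -/
noncomputable def logTanhHalf (x : ℝ) : ℝ := log (sinh x / (1 + cosh x))

lemma hasDerivAt_logTanhHalf {x : ℝ} (hx : x ≠ 0) : HasDerivAt logTanhHalf (sinh x)⁻¹ x := by
  have hs : sinh x ≠ 0 := sinh_ne_zero.mpr hx
  have hc := one_add_cosh_ne_zero x
  refine (((hasDerivAt_sinh x).div ((hasDerivAt_cosh x).const_add 1) hc).log
    (div_ne_zero hs hc)).congr_deriv ?_
  simp only [Pi.div_apply]
  field_simp
  linear_combination cosh_sq x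

noncomputable def greenProfile (x : ℝ) : ℝ :=
  2 + (cosh x / sinh x) ^ 2 + 3 * cosh x * logTanhHalf x

noncomputable def greenFlux (x : ℝ) : ℝ :=
  5 * cosh x * sinh x ^ 2 - 2 * cosh x ^ 3 + 3 * sinh x ^ 4 * logTanhHalf x

lemma hasDerivAt_greenProfile {x : ℝ} (hx : x ≠ 0) :
    HasDerivAt greenProfile (greenFlux x / sinh x ^ 3) x := by
  have hs : sinh x ≠ 0 := sinh_ne_zero.mpr hx
  refine ((((hasDerivAt_cosh x).div (hasDerivAt_sinh x) hs).pow 2).const_add 2 |>.add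
    (((hasDerivAt_cosh x).const_mul 3).mul (hasDerivAt_logTanhHalf hx))).congr_deriv ?_
  norm_num only [greenFlux, Pi.div_apply]
  field_simp
  ring

lemma hasDerivAt_greenFlux {x : ℝ} (hx : x ≠ 0) :
    HasDerivAt greenFlux (4 * sinh x ^ 3 * greenProfile x) x := by
  have hs : sinh x ≠ 0 := sinh_ne_zero.mpr hx
  refine ((((hasDerivAt_cosh x).const_mul 5).mul ((hasDerivAt_sinh x).pow 2)).sub
    (((hasDerivAt_cosh x).pow 3).const_mul 2) |>.add
    ((((hasDerivAt_sinh x).pow 4).const_mul 3).mul (hasDerivAt_logTanhHalf hx))).congr_deriv ?_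
  simp only [greenProfile, Pi.pow_apply]
  field_simp
  ring

lemma continuous_greenFlux : Continuous greenFlux := by
  have h : greenFlux = fun x => 5 * cosh x * sinh x ^ 2 - 2 * cosh x ^ 3 +
      3 * sinh x ^ 3 * (1 + cosh x) *
        (sinh x / (1 + cosh x) * log (sinh x / (1 + cosh x))) := by
    funext x
    have hc := one_add_cosh_ne_zero x
    simp only [greenFlux, logTanhHalf]
    field_simp
  rw [h]
  fun_prop (disch := exact one_add_cosh_ne_zero)

lemma tendsto_greenFlux_nhdsGT_zero : Tendsto greenFlux (𝓝[>] 0) (𝓝 (-2)) := by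
  have h : greenFlux 0 = -2 := by norm_num [greenFlux, logTanhHalf]
  exact h ▸ continuous_greenFlux.continuousWithinAt.tendsto

lemma cosh_div_sinh_eq (x : ℝ) : cosh x / sinh x = (1 + exp (-x) ^ 2) / (1 - exp (-x) ^ 2) := by
  rw [cosh_eq, sinh_eq, exp_neg]
  have := exp_pos x
  field_simp

lemma sinh_div_one_add_cosh_eq (x : ℝ) :
    sinh x / (1 + cosh x) = (1 - exp (-x)) / (1 + exp (-x)) := by
  rw [cosh_eq, sinh_eq, exp_neg]
  have := exp_pos x
  field_simp
  ring

lemma cosh_mul_sinh_div_one_add_cosh_sub_one (x : ℝ) :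
    cosh x * (sinh x / (1 + cosh x) - 1) = -(1 + exp (-x) ^ 2) / (1 + exp (-x)) := by
  rw [cosh_eq, sinh_eq, exp_neg]
  have := exp_pos x
  field_simp
  ring

lemma tendsto_comp_exp_neg_atTop {f : ℝ → ℝ} (hf : ContinuousAt f 0) :
    Tendsto (fun x => f (exp (-x))) atTop (𝓝 (f 0)) :=
  hf.tendsto.comp tendsto_exp_neg_atTop_nhds_zero

lemma tendsto_greenProfile_atTop : Tendsto greenProfile atTop (𝓝 0) := by
  have hcoth : Tendsto (fun x => cosh x / sinh x) atTop (𝓝 1) := by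
    simp only [cosh_div_sinh_eq]
    convert tendsto_comp_exp_neg_atTop (f := fun u => (1 + u ^ 2) / (1 - u ^ 2))
      (by fun_prop (disch := norm_num)) using 2
    norm_num
  have hlog : Tendsto (fun x => cosh x * logTanhHalf x) atTop (𝓝 (-1)) := by
    refine tendsto_mul_log_of_tendsto_mul_sub_one ?_ ?_
    · simp only [sinh_div_one_add_cosh_eq]
      convert tendsto_comp_exp_neg_atTop (f := fun u => (1 - u) / (1 + u))
        (by fun_prop (disch := norm_num)) using 2
      norm_num
    · simp only [cosh_mul_sinh_div_one_add_cosh_sub_one]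
      convert tendsto_comp_exp_neg_atTop (f := fun u => -(1 + u ^ 2) / (1 + u))
        (by fun_prop (disch := norm_num)) using 2
      norm_num
  have := ((hcoth.pow 2).const_add 2).add (hlog.const_mul 3)
  norm_num at this
  exact this.congr fun x => by simp only [greenProfile]; ring

/-- The Dirichlet Green's function of `D² - (d-2)/l²` on the Rindler horizon for `d = 6`:
`G(χ) = (1/(4π²l²))(2 + coth² χ + 3 cosh χ · ln(sinh χ/(1+cosh χ)))` satisfies the radial
ODE `(sinh³ χ · G')' = 4 sinh³ χ · G` for `χ > 0`, vanishes as `χ → ∞`, and has the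
delta-function normalization `lim_{χ→0⁺} 2π² l² sinh³ χ · G'(χ) = -1`. -/
theorem greens_function_rindler_d6 (l : ℝ) (hl : 0 < l) (G : ℝ → ℝ)
    (hG : ∀ χ : ℝ, G χ = (1 / (4 * π ^ 2 * l ^ 2)) *
      (2 + (Real.cosh χ / Real.sinh χ) ^ 2 +
        3 * Real.cosh χ * Real.log (Real.sinh χ / (1 + Real.cosh χ)))) :
    (∀ χ : ℝ, 0 < χ →
      deriv (fun x => Real.sinh x ^ 3 * deriv G x) χ = 4 * Real.sinh χ ^ 3 * G χ) ∧
    Tendsto G atTop (nhds 0) ∧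
    Tendsto (fun χ => 2 * π ^ 2 * l ^ 2 * Real.sinh χ ^ 3 * deriv G χ)
      (nhdsWithin 0 (Set.Ioi 0)) (nhds (-1)) := by
  set c : ℝ := 1 / (4 * π ^ 2 * l ^ 2) with hc
  have hG' : G = fun x => c * greenProfile x := funext hG
  have hflux {x : ℝ} (hx : x ≠ 0) : sinh x ^ 3 * deriv G x = c * greenFlux x := by
    rw [hG', ((hasDerivAt_greenProfile hx).const_mul c).deriv]
    field_simp [sinh_ne_zero.mpr hx]
  refine ⟨fun χ hχ => ?_, ?_, ?_⟩
  · have hev : (fun x => sinh x ^ 3 * deriv G x) =ᶠ[𝓝 χ] fun x => c * greenFlux x :=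
      (eventually_ne_nhds hχ.ne').mono fun x => hflux
    rw [hev.deriv_eq, ((hasDerivAt_greenFlux hχ.ne').const_mul c).deriv, hG']
    ring
  · simpa [hG'] using tendsto_greenProfile_atTop.const_mul c
  · have hev : (fun x => greenFlux x / 2) =ᶠ[𝓝[>] 0]
        fun χ => 2 * π ^ 2 * l ^ 2 * sinh χ ^ 3 * deriv G χ := by
      filter_upwards [self_mem_nhdsWithin] with x (hx : 0 < x)
      rw [mul_assoc, hflux hx.ne', hc]
      field_simp
      ring
    have hlim := tendsto_greenFlux_nhdsGT_zero.div_const 2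
    norm_num at hlim
    exact hlim.congr' hev
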